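/- arXiv:1706.05684 — 3 statements merged into one kernel-verified Lean document; each statement's English description precedes it below -/
import Mathlib

section
/- For each α > 0, the function z(t) = 16 e^{2(t-t₀)}/(1+e^{2(t-t₀)})² with e^{2t₀} = 1/α satisfies -z'' + 4z = (3/2)z² on ℝ and additionally e^t z(t) → 0 as t → ±∞. -/
open Real Filter

private lemma expDeriv (t₀ s : ℝ) : HasDerivAt (fun s : ℝ => exp (2 * (s - t₀)))
    (2 * exp (2 * (s - t₀))) s := by
  have h : HasDerivAt (fun s : ℝ => 2 * (s - t₀)) 2 s := by
    simpa using ((hasDerivAt_id s).sub_const t₀).const_mul 2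
  simpa [mul_comm, Function.comp_def] using (Real.hasDerivAt_exp (2 * (s - t₀))).comp s h

private lemma denom_ne (t₀ s : ℝ) : (1 + exp (2 * (s - t₀))) ≠ 0 := by
  positivity

private lemma deriv1 (t₀ s : ℝ) :
    HasDerivAt (fun s : ℝ => 16 * exp (2 * (s - t₀)) / (1 + exp (2 * (s - t₀)))^2)
      ((32 * exp (2 * (s - t₀)) - 32 * exp (2 * (s - t₀))^2) / (1 + exp (2 * (s - t₀)))^3) s := by
  set E := exp (2 * (s - t₀)) with hE
  have hnum : HasDerivAt (fun s : ℝ => 16 * exp (2 * (s - t₀))) (16 * (2 * E)) s :=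
    (expDeriv t₀ s).const_mul 16
  have hden : HasDerivAt (fun s : ℝ => (1 + exp (2 * (s - t₀)))^2)
      (2 * (1 + E)^1 * (2 * E)) s := by
    simpa using (((expDeriv t₀ s).const_add 1).fun_pow 2)
  have := hnum.fun_div hden (by positivity)
  refine this.congr_deriv ?_
  have h1 : (1 + E) ≠ 0 := denom_ne t₀ s
  field_simp
  ring

private lemma deriv2 (t₀ s : ℝ) :
    HasDerivAt (fun s : ℝ =>
        (32 * exp (2 * (s - t₀)) - 32 * exp (2 * (s - t₀))^2) / (1 + exp (2 * (s - t₀)))^3)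
      ((64 * exp (2 * (s - t₀)) - 256 * exp (2 * (s - t₀))^2 + 64 * exp (2 * (s - t₀))^3)
        / (1 + exp (2 * (s - t₀)))^4) s := by
  set E := exp (2 * (s - t₀)) with hE
  have hnum : HasDerivAt (fun s : ℝ => 32 * exp (2 * (s - t₀)) - 32 * exp (2 * (s - t₀))^2)
      (32 * (2 * E) - 32 * (2 * E^1 * (2 * E))) s := by
    have h2 : HasDerivAt (fun s : ℝ => exp (2 * (s - t₀))^2) (2 * E^1 * (2 * E)) s := by
      simpa using (expDeriv t₀ s).fun_pow 2
    exact ((expDeriv t₀ s).const_mul 32).sub (h2.const_mul 32)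
  have hden : HasDerivAt (fun s : ℝ => (1 + exp (2 * (s - t₀)))^3)
      (3 * (1 + E)^2 * (2 * E)) s := by
    simpa using (((expDeriv t₀ s).const_add 1).fun_pow 3)
  have := hnum.fun_div hden (by positivity)
  refine this.congr_deriv ?_
  have h1 : (1 + E) ≠ 0 := denom_ne t₀ s
  field_simp
  ring

/-- For each `α > 0` there is `t₀` with `e^{2t₀} = 1/α` such that
`z(t) = 16 e^{2(t-t₀)}/(1+e^{2(t-t₀)})²` satisfies `-z'' + 4z = (3/2)z²` on `ℝ`
and `e^t z(t) → 0` as `t → ±∞`, giving a radial entire solution of the `N = 4`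
biharmonic `2`-Hessian equation. -/
theorem stmt7 (α : ℝ) (hα : 0 < α) :
    ∃ t₀ : ℝ, exp (2 * t₀) = 1 / α ∧
      (∀ t : ℝ,
        -(deriv (deriv (fun s : ℝ => 16 * exp (2 * (s - t₀)) / (1 + exp (2 * (s - t₀)))^2))) t
          + 4 * (16 * exp (2 * (t - t₀)) / (1 + exp (2 * (t - t₀)))^2)
        = (3/2) * (16 * exp (2 * (t - t₀)) / (1 + exp (2 * (t - t₀)))^2)^2) ∧
      Tendsto (fun t : ℝ => exp t * (16 * exp (2 * (t - t₀)) / (1 + exp (2 * (t - t₀)))^2))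
        atTop (nhds 0) ∧
      Tendsto (fun t : ℝ => exp t * (16 * exp (2 * (t - t₀)) / (1 + exp (2 * (t - t₀)))^2))
        atBot (nhds 0) := by
  refine ⟨-(Real.log α)/2, ?_, ?_, ?_, ?_⟩
  · rw [show 2 * (-(Real.log α)/2) = -Real.log α by ring, Real.exp_neg, Real.exp_log hα,
      one_div]
  · intro t
    set t₀ := -(Real.log α)/2
    have hd1 : deriv (fun s : ℝ => 16 * exp (2 * (s - t₀)) / (1 + exp (2 * (s - t₀)))^2)
        = fun s : ℝ => (32 * exp (2 * (s - t₀)) - 32 * exp (2 * (s - t₀))^2)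
            / (1 + exp (2 * (s - t₀)))^3 := by
      funext s; exact (deriv1 t₀ s).deriv
    rw [hd1, (deriv2 t₀ t).deriv]
    set E := exp (2 * (t - t₀)) with hE
    have h1 : (1 + E) ≠ 0 := denom_ne t₀ t
    field_simp
    ring
  · -- atTop
    set t₀ := -(Real.log α)/2
    have heq : (fun t : ℝ => exp t * (16 * exp (2 * (t - t₀)) / (1 + exp (2 * (t - t₀)))^2))
        = fun t : ℝ => exp (2 * t₀ - t) * (16 * exp (2 * (t - t₀))^2 / (1 + exp (2 * (t - t₀)))^2) := by
      funext t
      have h1 : (1 + exp (2 * (t - t₀))) ≠ 0 := denom_ne t₀ t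
      have : exp t * exp (2 * (t - t₀)) = exp (2 * t₀ - t) * exp (2 * (t - t₀))^2 := by
        rw [sq, ← Real.exp_add, ← Real.exp_add, ← Real.exp_add]; ring_nf
      field_simp
      rw [← Real.exp_add]; ring_nf
    rw [heq]
    have h1 : Tendsto (fun t : ℝ => exp (2 * t₀ - t)) atTop (nhds 0) := by
      apply Real.tendsto_exp_atBot.comp
      have := tendsto_atBot_add_const_right atTop (2 * t₀) tendsto_neg_atTop_atBot
      convert this using 1
      funext x; simp only [id, sub_eq_add_neg]; ring
    have h2 : Tendsto (fun t : ℝ => 16 * exp (2 * (t - t₀))^2 / (1 + exp (2 * (t - t₀)))^2)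
        atTop (nhds 16) := by
      have heq2 : (fun t : ℝ => 16 * exp (2 * (t - t₀))^2 / (1 + exp (2 * (t - t₀)))^2)
          = fun t : ℝ => 16 * (1 / (exp (-(2 * (t - t₀))) + 1))^2 := by
        funext t
        have h1 : (1 + exp (2 * (t - t₀))) ≠ 0 := denom_ne t₀ t
        rw [Real.exp_neg]
        have h2 : exp (2 * (t - t₀)) ≠ 0 := (Real.exp_pos _).ne'
        field_simp
      rw [heq2]
      have h3 : Tendsto (fun t : ℝ => exp (-(2 * (t - t₀)))) atTop (nhds 0) := by
        apply Real.tendsto_exp_atBot.comp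
        apply tendsto_neg_atTop_atBot.comp
        have := tendsto_atTop_add_const_right atTop (-(2 * t₀))
          (tendsto_id.const_mul_atTop (by norm_num : (0:ℝ) < 2))
        convert this using 1
        funext x; simp only [id, sub_eq_add_neg]; ring
      have h4 : Tendsto (fun t : ℝ => exp (-(2 * (t - t₀))) + 1) atTop (nhds 1) := by
        simpa using h3.add_const 1
      have h5 := (h4.inv₀ one_ne_zero).pow 2
      have := h5.const_mul 16
      simpa [one_div] using this
    simpa using h1.mul h2
  · -- atBot
    set t₀ := -(Real.log α)/2
    have h1 : Tendsto (fun t : ℝ => exp t) atBot (nhds 0) := Real.tendsto_exp_atBot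
    have h3 : Tendsto (fun t : ℝ => exp (2 * (t - t₀))) atBot (nhds 0) := by
      apply Real.tendsto_exp_atBot.comp
      have := tendsto_atBot_add_const_right atBot (-(2 * t₀))
        (tendsto_id.const_mul_atBot (by norm_num : (0:ℝ) < 2))
      convert this using 1
      funext x; simp only [id, sub_eq_add_neg]; ring
    have h2 : Tendsto (fun t : ℝ => 16 * exp (2 * (t - t₀)) / (1 + exp (2 * (t - t₀)))^2)
        atBot (nhds (16 * 0 / (1 + 0)^2)) := by
      exact ((h3.const_mul 16).div (((h3.const_add 1)).pow 2) (by norm_num))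
    have := h1.mul h2
    simpa using this
end

section
/- The linearization of the operator z ↦ -z'' + 4z - (3/2)z² about the explicit solution z₀(t) = 16 e^{2(t-t₀)}/(1+e^{2(t-t₀)})² is L = -d²/dt² + 4 - 3z₀(t), and the function φ(t) = e^{2t}(e^{4t} + e^{4t₀} - 3e^{2(t+t₀)})/(e^{2t}+e^{2t₀})³ satisfies Lφ = 0; moreover φ is not identically zero. (Equivalently, with the paper's normalization L = -d²/dt² + 1 - 48 e^{2(t+t₀)}/(e^{2t}+e^{2t₀})², the kernel element is ψ(t) = e^t(e^{4t}+e^{4t₀}-3e^{2(t+t₀)})/(e^{2t}+e^{2t₀})³.) -/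
/-!
Translating by `t₀` and rescaling by `e^{-t₀}` reduces everything to `t₀ = 0`, where
`e^{2t}/(e^{2t}+1)² = sech² t / 4` and `ψ(t) = (4 sech t - 5 sech³ t)/8`. The operator is then
the Pöschl–Teller operator `-d²/dt² + 1 - 12 sech²`, and since
`(sechⁿ)'' = n² sechⁿ - n(n+1) sechⁿ⁺²`, applying it to `a sech + b sech³` leaves
`-(10a + 8b) sech³`, which vanishes for `(a, b) = (4, -5)`.
-/

open Real

noncomputable def sechPow (n : ℕ) (s : ℝ) : ℝ := (cosh s ^ n)⁻¹

lemma hasDerivAt_sechPow (n : ℕ) (s : ℝ) :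
    HasDerivAt (sechPow n) (-n * sinh s * sechPow (n + 1) s) s := by
  have hcosh := (cosh_pos s).ne'
  refine (((hasDerivAt_cosh s).pow n).inv (pow_ne_zero n hcosh)).congr_deriv ?_
  cases n with
  | zero => simp
  | succ n =>
    simp only [sechPow, Nat.add_sub_cancel, Pi.pow_apply]
    field_simp
    ring

lemma deriv_sechPow (n : ℕ) : deriv (sechPow n) = fun s => -n * sinh s * sechPow (n + 1) s :=
  funext fun s => (hasDerivAt_sechPow n s).deriv

lemma hasDerivAt_deriv_sechPow (n : ℕ) (s : ℝ) :
    HasDerivAt (deriv (sechPow n))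
      (n ^ 2 * sechPow n s - n * (n + 1) * sechPow (n + 2) s) s := by
  rw [deriv_sechPow]
  refine (((hasDerivAt_sinh s).const_mul _).mul (hasDerivAt_sechPow (n + 1) s)).congr_deriv ?_
  have hcosh := (cosh_pos s).ne'
  simp only [sechPow]
  field_simp
  rw [sinh_sq]
  push_cast
  ring

lemma sechPow_mul_sechPow (m n : ℕ) (s : ℝ) :
    sechPow m s * sechPow n s = sechPow (m + n) s := by
  simp only [sechPow, pow_add, mul_inv]

noncomputable def kernelProfile (s : ℝ) : ℝ := 4 * sechPow 1 s - 5 * sechPow 3 s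

lemma deriv_deriv_kernelProfile (s : ℝ) :
    deriv (deriv kernelProfile) s = 4 * sechPow 1 s - 53 * sechPow 3 s + 60 * sechPow 5 s := by
  have hderiv : deriv kernelProfile = fun s => 4 * deriv (sechPow 1) s - 5 * deriv (sechPow 3) s :=
    funext fun s => by
      rw [deriv_sechPow, deriv_sechPow]
      exact (((hasDerivAt_sechPow 1 s).const_mul 4).sub
        ((hasDerivAt_sechPow 3 s).const_mul 5)).deriv
  rw [hderiv]
  refine (((hasDerivAt_deriv_sechPow 1 s).const_mul 4).sub
    ((hasDerivAt_deriv_sechPow 3 s).const_mul 5)).deriv.trans ?_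
  push_cast
  ring

lemma kernelProfile_mem_kernel (s : ℝ) :
    -deriv (deriv kernelProfile) s + kernelProfile s
      - 12 * sechPow 2 s * kernelProfile s = 0 := by
  rw [deriv_deriv_kernelProfile, kernelProfile]
  linear_combination (-48) * sechPow_mul_sechPow 2 1 s + 60 * sechPow_mul_sechPow 2 3 s

lemma kernelProfile_zero : kernelProfile 0 = -1 := by
  norm_num [kernelProfile, sechPow]

lemma deriv_deriv_const_mul_comp_sub (f : ℝ → ℝ) (c a t : ℝ) :
    deriv (deriv fun t => c * f (t - a)) t = c * deriv (deriv f) (t - a) := by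
  simp only [deriv_const_mul_field', deriv_comp_sub_const]

lemma cosh_sub_eq (t₀ t : ℝ) :
    cosh (t - t₀) = (exp t ^ 2 + exp t₀ ^ 2) / (2 * exp t * exp t₀) := by
  rw [cosh_eq, exp_sub, exp_neg, exp_sub]
  field_simp

lemma explicit_eq_kernelProfile (t₀ t : ℝ) :
    exp t * (exp (4*t) + exp (4*t₀) - 3 * exp (2*(t + t₀))) / (exp (2*t) + exp (2*t₀))^3
      = exp (-t₀) / 8 * kernelProfile (t - t₀) := by
  simp only [kernelProfile, sechPow, cosh_sub_eq, exp_neg, mul_add, exp_add]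
  rw [show (4:ℝ) = (4:ℕ) by norm_num, show (2:ℝ) = (2:ℕ) by norm_num]
  simp only [exp_nat_mul]
  field_simp
  ring

lemma potential_eq_sechPow (t₀ t : ℝ) :
    48 * exp (2*(t + t₀)) / (exp (2*t) + exp (2*t₀))^2 = 12 * sechPow 2 (t - t₀) := by
  simp only [sechPow, cosh_sub_eq, mul_add, exp_add]
  rw [show (2:ℝ) = (2:ℕ) by norm_num]
  simp only [exp_nat_mul]
  field_simp
  ring

/-- The function `ψ(t) = e^t (e^{4t} + e^{4t₀} - 3 e^{2(t+t₀)}) / (e^{2t} + e^{2t₀})³`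
lies in the kernel of the linearized operator
`L = -d²/dt² + 1 - 48 e^{2(t+t₀)}/(e^{2t}+e^{2t₀})²`, and `ψ` is not identically zero. -/
theorem stmt9 (t₀ : ℝ) (ψ : ℝ → ℝ)
    (hψ : ψ = fun t : ℝ =>
      exp t * (exp (4*t) + exp (4*t₀) - 3 * exp (2*(t + t₀))) / (exp (2*t) + exp (2*t₀))^3) :
    (∀ t : ℝ,
      -(deriv (deriv ψ) t) + ψ t
        - (48 * exp (2*(t + t₀)) / (exp (2*t) + exp (2*t₀))^2) * ψ t = 0) ∧
    (∃ t : ℝ, ψ t ≠ 0) := by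
  have hψ' : ψ = fun t => exp (-t₀) / 8 * kernelProfile (t - t₀) := by
    simp only [hψ, explicit_eq_kernelProfile]
  subst hψ'
  refine ⟨fun t => ?_, ⟨t₀, ?_⟩⟩
  · rw [deriv_deriv_const_mul_comp_sub, potential_eq_sechPow]
    linear_combination (exp (-t₀) / 8) * kernelProfile_mem_kernel (t - t₀)
  · simp only [sub_self, kernelProfile_zero]
    positivity
end

section
/- For α > 0, the function u(r) = 8/(1 + α r²) on ℝ⁴ (i.e., u(x) = 8/(1+α|x|²) for x ∈ ℝ⁴) satisfies Δ²u = S₂[u] pointwise, where Δ² is the bilaplacian in ℝ⁴ and S₂[u] is the second elementary symmetric polynomial of the eigenvalues of the Hessian matrix D²u; moreover u(x) → 0 as |x| → ∞. -/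
/-!
Write `u(x) = g(|x|²)` with `g(s) = 8 / (1 + α s)`. The Hessian of such a radial function is
`4 g''(r) x xᵀ + 2 g'(r) I` with `r = |x|²`, so in `ℝ⁴` we get `Δu = 4 r g'' + 8 g'` and
`S₂[u] = 24 r g' g'' + 24 g'²`. The Laplacian formula applied twice gives
`Δ²u = 16 r² g'''' + 96 r g''' + 96 g''`. Since `g⁽ᵏ⁾(s) = 8 (-α)ᵏ k! / (1 + α s)ᵏ⁺¹`, both sides
equal `1536 α² (1 - α r) / (1 + α r)⁵`.
-/

open Real Filter

/-- The Hessian matrix of `u : ℝ⁴ → ℝ` at `x`, via iterated Fréchet derivatives. -/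
noncomputable def hess (u : EuclideanSpace ℝ (Fin 4) → ℝ) (x : EuclideanSpace ℝ (Fin 4)) :
    Matrix (Fin 4) (Fin 4) ℝ :=
  fun i j => iteratedFDeriv ℝ 2 u x ![EuclideanSpace.single i (1:ℝ), EuclideanSpace.single j 1]

/-- The Laplacian of `u : ℝ⁴ → ℝ`, the trace of the Hessian. -/
noncomputable def lap (u : EuclideanSpace ℝ (Fin 4) → ℝ) (x : EuclideanSpace ℝ (Fin 4)) : ℝ :=
  (hess u x).trace

/-- The `2`-Hessian `S₂[u]`, the second elementary symmetric function of the eigenvalues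
of the Hessian: `S₂[u] = ½((tr D²u)² - tr((D²u)²))`. -/
noncomputable def S2 (u : EuclideanSpace ℝ (Fin 4) → ℝ) (x : EuclideanSpace ℝ (Fin 4)) : ℝ :=
  ((hess u x).trace^2 - (hess u x * hess u x).trace) / 2

open scoped InnerProductSpace

local notation "ℝ⁴" => EuclideanSpace ℝ (Fin 4)

section Radial

variable {E : Type*} [NormedAddCommGroup E] [InnerProductSpace ℝ E] {g g₁ g₂ : ℝ → ℝ}

lemma hasFDerivAt_comp_norm_sq (hg : ∀ s, 0 ≤ s → HasDerivAt g (g₁ s) s) (x : E) :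
    HasFDerivAt (fun y : E => g (‖y‖ ^ 2)) ((2 * g₁ (‖x‖ ^ 2)) • innerSL ℝ x) x := by
  refine ((hg _ (by positivity)).comp_hasFDerivAt x (hasStrictFDerivAt_norm_sq x).hasFDerivAt)
    |>.congr_fderiv ?_
  ext y
  simp
  ring

lemma iteratedFDeriv_two_comp_norm_sq (h1 : ∀ s, 0 ≤ s → HasDerivAt g (g₁ s) s)
    (h2 : ∀ s, 0 ≤ s → HasDerivAt g₁ (g₂ s) s) (x v w : E) :
    iteratedFDeriv ℝ 2 (fun y : E => g (‖y‖ ^ 2)) x ![v, w]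
      = 4 * g₂ (‖x‖ ^ 2) * ⟪x, v⟫_ℝ * ⟪x, w⟫_ℝ + 2 * g₁ (‖x‖ ^ 2) * ⟪v, w⟫_ℝ := by
  have hfderiv : fderiv ℝ (fun y : E => g (‖y‖ ^ 2))
      = fun y => (2 * g₁ (‖y‖ ^ 2)) • innerSL ℝ y :=
    funext fun y => (hasFDerivAt_comp_norm_sq h1 y).fderiv
  have hcoeff := hasFDerivAt_comp_norm_sq (g := fun s => 2 * g₁ s)
    (fun s hs => (h2 s hs).const_mul 2) x
  have hsecond : HasFDerivAt (fun y : E => (2 * g₁ (‖y‖ ^ 2)) • innerSL ℝ y) _ x :=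
    hcoeff.smul (innerSL ℝ (E := E)).hasFDerivAt
  rw [iteratedFDeriv_two_apply, hfderiv, hsecond.fderiv]
  simp only [Matrix.cons_val_zero, Matrix.cons_val_one, Matrix.cons_val_fin_one, add_apply,
    smul_apply, ContinuousLinearMap.smulRight_apply, coe_innerSL_apply, smul_eq_mul]
  rw [innerSL_apply_apply]
  ring

end Radial

section FourDim

variable {g g₁ g₂ : ℝ → ℝ}

lemma hess_comp_norm_sq (h1 : ∀ s, 0 ≤ s → HasDerivAt g (g₁ s) s)
    (h2 : ∀ s, 0 ≤ s → HasDerivAt g₁ (g₂ s) s) (x : ℝ⁴) (i j : Fin 4) :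
    hess (fun y => g (‖y‖ ^ 2)) x i j
      = 4 * g₂ (‖x‖ ^ 2) * x i * x j
        + 2 * g₁ (‖x‖ ^ 2) * (1 : Matrix (Fin 4) (Fin 4) ℝ) i j := by
  rw [hess, iteratedFDeriv_two_comp_norm_sq h1 h2, EuclideanSpace.inner_single_right,
    EuclideanSpace.inner_single_right, EuclideanSpace.inner_single_right, Matrix.one_apply]
  simp [eq_comm]

lemma sum_sq_eq_norm_sq (x : ℝ⁴) : x 0 ^ 2 + x 1 ^ 2 + x 2 ^ 2 + x 3 ^ 2 = ‖x‖ ^ 2 := by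
  simp [EuclideanSpace.norm_sq_eq, Fin.sum_univ_four]

lemma lap_comp_norm_sq (h1 : ∀ s, 0 ≤ s → HasDerivAt g (g₁ s) s)
    (h2 : ∀ s, 0 ≤ s → HasDerivAt g₁ (g₂ s) s) (x : ℝ⁴) :
    lap (fun y => g (‖y‖ ^ 2)) x = 4 * g₂ (‖x‖ ^ 2) * ‖x‖ ^ 2 + 8 * g₁ (‖x‖ ^ 2) := by
  simp only [lap, Matrix.trace, Matrix.diag, Fin.sum_univ_four, hess_comp_norm_sq h1 h2,
    Matrix.one_apply_eq, ← sum_sq_eq_norm_sq x]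
  ring

lemma S2_comp_norm_sq (h1 : ∀ s, 0 ≤ s → HasDerivAt g (g₁ s) s)
    (h2 : ∀ s, 0 ≤ s → HasDerivAt g₁ (g₂ s) s) (x : ℝ⁴) :
    S2 (fun y => g (‖y‖ ^ 2)) x
      = 24 * g₁ (‖x‖ ^ 2) * g₂ (‖x‖ ^ 2) * ‖x‖ ^ 2 + 24 * g₁ (‖x‖ ^ 2) ^ 2 := by
  simp only [S2, Matrix.trace, Matrix.diag, Matrix.mul_apply, Fin.sum_univ_four,
    hess_comp_norm_sq h1 h2, Matrix.one_apply, Fin.reduceEq, if_true, if_false,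
    ← sum_sq_eq_norm_sq x]
  ring

lemma lap_lap_comp_norm_sq {G : ℕ → ℝ → ℝ}
    (hG : ∀ k s, 0 ≤ s → HasDerivAt (G k) (G (k + 1) s) s) (x : ℝ⁴) :
    lap (lap (fun y => G 0 (‖y‖ ^ 2))) x
      = 16 * G 4 (‖x‖ ^ 2) * (‖x‖ ^ 2) ^ 2 + 96 * G 3 (‖x‖ ^ 2) * ‖x‖ ^ 2 + 96 * G 2 (‖x‖ ^ 2) := by
  have hlap : lap (fun y => G 0 (‖y‖ ^ 2))
      = fun y => (fun t => 4 * G 2 t * t + 8 * G 1 t) (‖y‖ ^ 2) :=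
    funext (lap_comp_norm_sq (hG 0) (hG 1))
  have h1 : ∀ s, 0 ≤ s → HasDerivAt (fun t => 4 * G 2 t * t + 8 * G 1 t)
      (4 * G 3 s * s + 12 * G 2 s) s := fun s hs =>
    ((((hG 2 s hs).const_mul 4).mul (hasDerivAt_id' s)).add
      ((hG 1 s hs).const_mul 8)).congr_deriv (by ring)
  have h2 : ∀ s, 0 ≤ s → HasDerivAt (fun t => 4 * G 3 t * t + 12 * G 2 t)
      (4 * G 4 s * s + 16 * G 3 s) s := fun s hs =>
    ((((hG 3 s hs).const_mul 4).mul (hasDerivAt_id' s)).add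
      ((hG 2 s hs).const_mul 12)).congr_deriv (by ring)
  rw [hlap, lap_comp_norm_sq h1 h2]
  ring

end FourDim

/-- The `k`-th derivative of `s ↦ 8 / (1 + α s)`. -/
noncomputable def bubbleProfile (α : ℝ) (k : ℕ) (s : ℝ) : ℝ :=
  8 * (-α) ^ k * k.factorial / (1 + α * s) ^ (k + 1)

lemma hasDerivAt_bubbleProfile (α : ℝ) (k : ℕ) {s : ℝ} (hs : 1 + α * s ≠ 0) :
    HasDerivAt (bubbleProfile α k) (bubbleProfile α (k + 1) s) s := by
  have hbase : HasDerivAt (fun t => 1 + α * t) α s := by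
    simpa using ((hasDerivAt_id s).const_mul α).const_add 1
  have hquot : HasDerivAt (bubbleProfile α k) _ s :=
    (hasDerivAt_const s (8 * (-α) ^ k * k.factorial)).div (hbase.pow (k + 1)) (pow_ne_zero _ hs)
  convert hquot using 1
  simp only [bubbleProfile, Nat.factorial_succ]
  push_cast
  field_simp
  ring

/-- For `α > 0`, the function `u(x) = 8/(1 + α|x|²)` on `ℝ⁴` satisfies
`Δ²u = S₂[u]` pointwise and tends to `0` as `|x| → ∞`. -/
theorem stmt11 (α : ℝ) (hα : 0 < α)
    (u : EuclideanSpace ℝ (Fin 4) → ℝ) (hu : u = fun x => 8 / (1 + α * ‖x‖^2)) :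
    (∀ x : EuclideanSpace ℝ (Fin 4), lap (lap u) x = S2 u x) ∧
    Tendsto u (Filter.cocompact (EuclideanSpace ℝ (Fin 4))) (nhds 0) := by
  have hu' : u = fun x => bubbleProfile α 0 (‖x‖ ^ 2) := by
    simp [hu, bubbleProfile]
  have hG : ∀ k s, 0 ≤ s → HasDerivAt (bubbleProfile α k) (bubbleProfile α (k + 1) s) s :=
    fun k s hs => hasDerivAt_bubbleProfile α k (by positivity)
  refine ⟨fun x => ?_, ?_⟩
  · have hx : 1 + α * ‖x‖ ^ 2 ≠ 0 := by positivity
    rw [hu', lap_lap_comp_norm_sq hG, S2_comp_norm_sq (hG 0) (hG 1)]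
    simp only [bubbleProfile, Nat.factorial]
    push_cast
    field_simp
    ring
  · have hden : Tendsto (fun r : ℝ => 1 + α * r ^ 2) atTop atTop :=
      tendsto_atTop_add_const_left _ 1
        ((tendsto_pow_atTop two_ne_zero).const_mul_atTop hα)
    rw [hu]
    exact (tendsto_const_nhds.div_atTop hden).comp tendsto_norm_cocompact_atTop
end
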